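/- Let U ⊆ ℂ² be open containing points (X,0), and let λ : U → ℂ be smooth with λ(X,0) = 0 for all X with (X,0) ∈ U (so the X-axis is a leaf). Let α, β : Ω → ℂ be holomorphic on an open set Ω ⊆ ℂ, with β nowhere vanishing, and define λ̃(x,y) = (λ(α(x), β(x)·y)·α′(x) − β′(x)·y)/β(x) wherever it makes sense. Set b(X) := (∂λ/∂ȳ)(X,0) and b̃(x) := (∂λ̃/∂ȳ)(x,0). Then for every x ∈ Ω with (α(x),0) ∈ U, one has b̃(x) = (|β(x)|²·α′(x)/β(x)²)·b(α(x)). Equivalently, along the leaf the coefficient b of the antiholomorphic part of Bott's connection transforms by the cocycle β²/(|β|²·α′). -/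

import Mathlib

open Complex ComplexConjugate

/-- Wirtinger derivative `∂f/∂ȳ` of `f : ℂ² → ℂ`, via the real Fréchet derivative. -/
noncomputable def wdybar (f : ℂ × ℂ → ℂ) (p : ℂ × ℂ) : ℂ :=
  (1 / 2 : ℂ) * (fderiv ℝ f p (0, 1) + Complex.I * fderiv ℝ f p (0, Complex.I))

/-- Along the leaf `{y = 0}`, the coefficient `b = (∂λ/∂ȳ)(·,0)` of the antiholomorphic
part of Bott's connection transforms under the holomorphic change of coordinates
`Φ(x,y) = (α(x), β(x)y)` by the cocycle `β²/(|β|²·α′)`: for the pulled-back slope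
`λ̃(x,y) = (λ(α(x), β(x)y)·α′(x) − β′(x)·y)/β(x)` one has
`b̃(x) = (|β(x)|²·α′(x)/β(x)²)·b(α(x))`. -/
theorem stmt5 (U : Set (ℂ × ℂ)) (hU : IsOpen U)
    (lam : ℂ × ℂ → ℂ)
    (hsm : ContDiffOn ℝ (⊤ : ℕ∞) lam U)
    (hleaf : ∀ X : ℂ, (X, (0 : ℂ)) ∈ U → lam (X, 0) = 0)
    (Ω : Set ℂ) (hΩ : IsOpen Ω)
    (α β : ℂ → ℂ)
    (hα : DifferentiableOn ℂ α Ω) (hβ : DifferentiableOn ℂ β Ω)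
    (hβ0 : ∀ x ∈ Ω, β x ≠ 0)
    (lamT : ℂ × ℂ → ℂ)
    (hlamT : ∀ p : ℂ × ℂ, lamT p =
      (lam (α p.1, β p.1 * p.2) * deriv α p.1 - deriv β p.1 * p.2) / β p.1)
    (b bT : ℂ → ℂ)
    (hb : ∀ X : ℂ, b X = wdybar lam (X, 0))
    (hbT : ∀ x : ℂ, bT x = wdybar lamT (x, 0)) :
    ∀ x ∈ Ω, (α x, (0 : ℂ)) ∈ U →
      bT x = ((‖β x‖ : ℝ) : ℂ) ^ 2 * deriv α x / (β x) ^ 2 * b (α x) := by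
  intro x hx hXU
  set X := α x with hX
  set c := β x with hc
  set a' := deriv α x with ha'
  set c' := deriv β x with hc'
  have hc0 : c ≠ 0 := hβ0 x hx
  have hlamd : DifferentiableAt ℝ lam (X, 0) :=
    (hsm.contDiffAt (hU.mem_nhds hXU)).differentiableAt (by simp)
  set L : ℂ × ℂ →L[ℝ] ℂ := fderiv ℝ lam (X, 0) with hL
  have hlamF : HasFDerivAt lam L (X, 0) := hlamd.hasFDerivAt
  have hαx : DifferentiableAt ℝ α x :=
    ((hα.differentiableAt (hΩ.mem_nhds hx))).restrictScalars ℝ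
  have hβx : DifferentiableAt ℝ β x :=
    ((hβ.differentiableAt (hΩ.mem_nhds hx))).restrictScalars ℝ
  have hα'x : DifferentiableAt ℝ (deriv α) x :=
    (((hα.analyticOnNhd hΩ).deriv x hx).differentiableAt).restrictScalars ℝ
  have hβ'x : DifferentiableAt ℝ (deriv β) x :=
    (((hβ.analyticOnNhd hΩ).deriv x hx).differentiableAt).restrictScalars ℝ
  have hlamTfun : lamT = fun p : ℂ × ℂ =>
      (lam (α p.1, β p.1 * p.2) * deriv α p.1 - deriv β p.1 * p.2) / β p.1 :=
    funext hlamT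
  -- lamT is differentiable at (x,0)
  have hβ1 : DifferentiableAt ℝ (fun p : ℂ × ℂ => β p.1) (x, 0) :=
    hβx.comp (x, 0) differentiableAt_fst
  have hα'1 : DifferentiableAt ℝ (fun p : ℂ × ℂ => deriv α p.1) (x, 0) :=
    by have := hα'x.comp (x, (0 : ℂ)) (differentiableAt_fst (𝕜 := ℝ) (p := (x, (0 : ℂ)))); exact this
  have hβ'1 : DifferentiableAt ℝ (fun p : ℂ × ℂ => deriv β p.1) (x, 0) :=
    by have := hβ'x.comp (x, (0 : ℂ)) (differentiableAt_fst (𝕜 := ℝ) (p := (x, (0 : ℂ)))); exact this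
  have hΦ : DifferentiableAt ℝ (fun p : ℂ × ℂ => (α p.1, β p.1 * p.2)) (x, 0) :=
    DifferentiableAt.prodMk (hαx.comp (x, (0 : ℂ)) (differentiableAt_fst (𝕜 := ℝ) (p := (x, (0 : ℂ))))) (hβ1.mul differentiableAt_snd)
  have hlamd' : DifferentiableAt ℝ lam ((fun p : ℂ × ℂ => (α p.1, β p.1 * p.2)) (x, 0)) := by
    simpa using hlamd
  have hlamΦ : DifferentiableAt ℝ (fun p : ℂ × ℂ => lam (α p.1, β p.1 * p.2)) (x, 0) :=
    hlamd'.comp (x, 0) hΦ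
  have hinv : DifferentiableAt ℝ (fun p : ℂ × ℂ => (β p.1)⁻¹) (x, 0) :=
    hβ1.inv (by simpa using hc0)
  have hdT : DifferentiableAt ℝ lamT (x, 0) := by
    rw [hlamTfun]
    simp only [div_eq_mul_inv]
    exact ((hlamΦ.mul hα'1).sub (hβ'1.mul differentiableAt_snd)).mul hinv
  -- one-variable slice
  have hmul : HasFDerivAt (fun y : ℂ => c * y) (c • ContinuousLinearMap.id ℝ ℂ) 0 := by
    simpa using (hasFDerivAt_id (0 : ℂ)).const_mul c
  have hpair : HasFDerivAt (fun y : ℂ => (X, c * y))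
      ((0 : ℂ →L[ℝ] ℂ).prod (c • ContinuousLinearMap.id ℝ ℂ)) 0 :=
    HasFDerivAt.prodMk (hasFDerivAt_const X (0 : ℂ)) hmul
  have hlamF' : HasFDerivAt lam L ((fun y : ℂ => (X, c * y)) 0) := by
    simpa using hlamF
  have hcomp : HasFDerivAt (fun y : ℂ => lam (X, c * y))
      (L.comp ((0 : ℂ →L[ℝ] ℂ).prod (c • ContinuousLinearMap.id ℝ ℂ))) 0 :=
    hlamF'.comp 0 hpair
  set D : ℂ →L[ℝ] ℂ :=
    c⁻¹ • ((a' • (L.comp ((0 : ℂ →L[ℝ] ℂ).prod (c • ContinuousLinearMap.id ℝ ℂ)))) -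
      c' • ContinuousLinearMap.id ℝ ℂ) with hD
  have hh : HasFDerivAt (fun y : ℂ => lamT (x, y)) D 0 := by
    have h1 := ((hcomp.mul_const a').sub ((hasFDerivAt_id (0 : ℂ)).const_mul c')).mul_const c⁻¹
    have heq : (fun y : ℂ => lamT (x, y)) =
        fun y : ℂ => (lam (X, c * y) * a' - c' * y) * c⁻¹ := by
      funext y; rw [hlamT]; simp [div_eq_mul_inv]; rfl
    rw [heq]
    convert h1 using 2 <;> rfl
  have hgR : HasFDerivAt (fun y : ℂ => ((x : ℂ), y))
      ((0 : ℂ →L[ℝ] ℂ).prod (ContinuousLinearMap.id ℝ ℂ)) 0 :=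
    HasFDerivAt.prodMk (hasFDerivAt_const x (0 : ℂ)) (hasFDerivAt_id 0)
  have hdT' : HasFDerivAt lamT (fderiv ℝ lamT (x, 0)) ((fun y : ℂ => ((x : ℂ), y)) 0) :=
    hdT.hasFDerivAt
  have hcomp2 : HasFDerivAt (fun y : ℂ => lamT (x, y))
      ((fderiv ℝ lamT (x, 0)).comp ((0 : ℂ →L[ℝ] ℂ).prod (ContinuousLinearMap.id ℝ ℂ))) 0 :=
    hdT'.comp 0 hgR
  have hDeq := hh.unique hcomp2
  have hev : ∀ v : ℂ, fderiv ℝ lamT (x, 0) (0, v) = D v := by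
    intro v
    have := congrArg (fun T : ℂ →L[ℝ] ℂ => T v) hDeq
    simpa using this.symm
  have hDval : ∀ v : ℂ, D v = (L (0, c * v) * a' - c' * v) / c := by
    intro v
    rw [hD]
    simp [ContinuousLinearMap.comp_apply, ContinuousLinearMap.prod_apply, smul_eq_mul,
      div_eq_mul_inv]
    ring
  have hdec1 : L (0, c) = (c.re : ℂ) * L (0, 1) + (c.im : ℂ) * L (0, Complex.I) := by
    have h : ((0 : ℂ), c) = (c.re : ℝ) • ((0 : ℂ), (1 : ℂ)) + (c.im : ℝ) • ((0 : ℂ), Complex.I) := by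
      simp [Prod.ext_iff, Complex.ext_iff]
    rw [h, map_add, map_smul, map_smul, Complex.real_smul, Complex.real_smul]
  have hdec2 : L (0, c * Complex.I) =
      (-(c.im : ℂ)) * L (0, 1) + (c.re : ℂ) * L (0, Complex.I) := by
    have h : ((0 : ℂ), c * Complex.I) =
        (-c.im : ℝ) • ((0 : ℂ), (1 : ℂ)) + (c.re : ℝ) • ((0 : ℂ), Complex.I) := by
      simp [Prod.ext_iff, Complex.ext_iff]
    rw [h, map_add, map_smul, map_smul, Complex.real_smul, Complex.real_smul]
    push_cast
    ring
  have hbTval : bT x = (1 / 2 : ℂ) * ((L (0, c * 1) * a' - c' * 1) / c +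
      Complex.I * ((L (0, c * Complex.I) * a' - c' * Complex.I) / c)) := by
    rw [hbT, wdybar, hev, hev, hDval, hDval]
  have hbval : b X = (1 / 2 : ℂ) * (L (0, 1) + Complex.I * L (0, Complex.I)) := by
    rw [hb, wdybar, ← hL]
  have habs : ((‖c‖ : ℝ) : ℂ) ^ 2 = c * ((c.re : ℂ) - (c.im : ℂ) * Complex.I) := by
    have h1 : ((‖c‖ : ℝ) : ℂ) ^ 2 = ((Complex.normSq c : ℝ) : ℂ) := by
      norm_cast; exact Complex.sq_norm c
    rw [h1]
    simp [Complex.normSq_apply, Complex.ext_iff]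
    ring
  rw [hbTval, hbval, mul_one, hdec1, hdec2, habs]
  linear_combination (((c.im : ℂ) * a' * L (0, Complex.I) - c') / (2 * c)) * Complex.I_sq +
    ((-(1 : ℂ) / 2) * c⁻¹ * ((c.re : ℂ) * L (0, 1) * a' +
      (c.re : ℂ) * L (0, Complex.I) * a' * Complex.I -
      (c.im : ℂ) * L (0, 1) * a' * Complex.I -
      (c.im : ℂ) * L (0, Complex.I) * a' * Complex.I ^ 2)) * (mul_inv_cancel₀ hc0)
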